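/- Let A, B be bounded matrices with A Hermitian, and suppose k ∈ C¹(ℝ) has derivative k'(x) = ∫_{-∞}^{∞} ℓ(t) e^{itx} dt for some ℓ ∈ L¹(ℝ). Then ‖[k(A), B]‖ ≤ ‖ℓ‖_{L¹}·‖[A, B]‖. -/

import Mathlib

open scoped Matrix.Norms.L2Operator
open MeasureTheory

/-- Functional calculus for a Hermitian matrix via its spectral decomposition. -/
noncomputable def hermCFC {n : Type*} [Fintype n] [DecidableEq n]
    {A : Matrix n n ℂ} (hA : A.IsHermitian) (f : ℝ → ℝ) : Matrix n n ℂ :=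
  (hA.eigenvectorUnitary : Matrix n n ℂ) *
    Matrix.diagonal (fun i => (f (hA.eigenvalues i) : ℂ)) *
    star (hA.eigenvectorUnitary : Matrix n n ℂ)

/-!
Diagonalize `A = U D U*` and put `C = U* B U`. The entries of `[k(D), C]` and `[D, C]` are
`(k(λᵢ) - k(λⱼ)) Cᵢⱼ` and `(λᵢ - λⱼ) Cᵢⱼ`. By Fubini and the substitution `x = s a + (1 - s) b`,
`k(a) - k(b) = (a - b) ∫ ℓ(t) ∫₀¹ e^{itsa} e^{it(1-s)b} ds dt`, so entrywise
`[k(D), C] = ∫∫ ℓ(t) e^{itsD} [D, C] e^{it(1-s)D} ds dt`. The integrand is `ℓ(t)` times a unitary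
conjugate of `[D, C]`, which gives `‖[k(D), C]‖ ≤ ‖ℓ‖₁ ‖[D, C]‖`; conjugating back by `U` changes
neither norm.
-/

section

open Complex Set

theorem sub_eq_integral_mul_intervalIntegral_exp {k ℓ : ℝ → ℂ} (hk : ContDiff ℝ 1 k)
    (hℓ : Integrable ℓ) (hrep : ∀ x : ℝ, deriv k x = ∫ t : ℝ, ℓ t * exp (I * t * x)) (a b : ℝ) :
    k a - k b = ∫ t : ℝ, ℓ t * ∫ x in b..a, exp (I * t * x) := by
  have hint : Integrable (Function.uncurry fun (x t : ℝ) => ℓ t * exp (I * t * x))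
      ((volume.restrict (uIoc b a)).prod volume) := by
    have : IsFiniteMeasure (volume.restrict (uIoc b a)) :=
      isFiniteMeasure_restrict.mpr measure_Ioc_lt_top.ne
    exact (hℓ.comp_snd _).mul_bdd (c := 1) (by fun_prop)
      (ae_of_all _ fun p => by simp [norm_exp])
  calc k a - k b = ∫ x in b..a, deriv k x :=
        (intervalIntegral.integral_deriv_eq_sub (fun x _ => hk.differentiable one_ne_zero x)
          ((hk.continuous_deriv le_rfl).intervalIntegrable b a)).symm
    _ = ∫ t : ℝ, ∫ x in b..a, ℓ t * exp (I * t * x) := by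
        simp_rw [hrep]; exact intervalIntegral_integral_swap hint
    _ = ∫ t : ℝ, ℓ t * ∫ x in b..a, exp (I * t * x) := by
        simp_rw [intervalIntegral.integral_const_mul]

theorem intervalIntegral_exp_I_mul_eq_sub_mul (t a b : ℝ) :
    ∫ x in b..a, exp (I * t * x) =
      (a - b) * ∫ s in (0 : ℝ)..1, exp (I * ↑(t * s) * a) * exp (I * ↑(t * (1 - s)) * b) := by
  have h := intervalIntegral.smul_integral_comp_mul_add (a := 0) (b := 1)
    (fun x : ℝ => exp (I * (t : ℂ) * (x : ℂ))) (a - b) b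
  simp only [mul_zero, zero_add, mul_one, sub_add_cancel, real_smul] at h
  rw [← h, ofReal_sub]
  congr 1
  refine intervalIntegral.integral_congr fun s _ => ?_
  rw [← exp_add]
  push_cast
  ring_nf

theorem norm_commutator_conj_unitary {R : Type*} [NormedRing R] [StarRing R] [CStarRing R]
    {u : R} (hu : u ∈ unitary R) (x b : R) :
    ‖u * x * star u * b - b * (u * x * star u)‖ =
      ‖x * (star u * b * u) - star u * b * u * x‖ := by
  set y := star u * b * u
  have hu₁ : star u * u = 1 := Unitary.star_mul_self_of_mem hu
  have hu₂ : u * star u = 1 := Unitary.mul_star_self_of_mem hu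
  have hb : b = u * y * star u := by
    simp only [y, ← mul_assoc, hu₂, one_mul]; simp only [mul_assoc, hu₂, mul_one]
  have hconj : ∀ z w : R, u * z * star u * (u * w * star u) = u * (z * w) * star u := by
    intro z w; simp only [mul_assoc]; rw [← mul_assoc (star u), hu₁, one_mul]
  rw [hb, hconj, hconj, ← sub_mul, ← mul_sub,
    CStarRing.norm_mul_mem_unitary _ (Unitary.star_mem hu), CStarRing.norm_mem_unitary_mul _ hu]

variable {n : Type*} [DecidableEq n]

open Matrix

/-- `exp (i τ D)` for the real diagonal matrix `D = diagonal d`. -/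
noncomputable def diagonalExpI (d : n → ℝ) (τ : ℝ) : Matrix n n ℂ :=
  diagonal fun i => exp (I * τ * d i)

theorem continuous_diagonalExpI (d : n → ℝ) : Continuous (diagonalExpI d) :=
  continuous_pi fun _ => continuous_pi fun _ => by
    simp only [diagonalExpI, diagonal_apply]; split_ifs <;> fun_prop

variable [Fintype n]

theorem diagonalExpI_mem_unitary (d : n → ℝ) (τ : ℝ) :
    diagonalExpI d τ ∈ unitary (Matrix n n ℂ) := by
  have hconj : ∀ i, star (exp (I * τ * d i)) = exp (-(I * τ * d i)) := fun i => by
    rw [RCLike.star_def, ← exp_conj]; simp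
  rw [Unitary.mem_iff, diagonalExpI, star_eq_conjTranspose, diagonal_conjTranspose]
  simp only [diagonal_mul_diagonal, Pi.star_apply, hconj, ← exp_add, neg_add_cancel,
    add_neg_cancel, exp_zero, diagonal_one, and_self]

theorem diagonalExpI_mul_mul_diagonalExpI_apply (d : n → ℝ) (σ τ : ℝ) (K : Matrix n n ℂ)
    (i j : n) :
    (diagonalExpI d σ * K * diagonalExpI d τ) i j =
      exp (I * σ * d i) * K i j * exp (I * τ * d j) := by
  simp only [diagonalExpI, diagonal_mul, mul_diagonal]

theorem norm_diagonalExpI_mul_mul_diagonalExpI (d : n → ℝ) (σ τ : ℝ) (K : Matrix n n ℂ) :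
    ‖diagonalExpI d σ * K * diagonalExpI d τ‖ = ‖K‖ := by
  rw [CStarRing.norm_mul_mem_unitary _ (diagonalExpI_mem_unitary d τ),
    CStarRing.norm_mem_unitary_mul _ (diagonalExpI_mem_unitary d σ)]

noncomputable def commutatorIntegrand (ℓ : ℝ → ℂ) (d : n → ℝ) (K : Matrix n n ℂ) (p : ℝ × ℝ) :
    Matrix n n ℂ :=
  ℓ p.1 • (diagonalExpI d (p.1 * p.2) * K * diagonalExpI d (p.1 * (1 - p.2)))

theorem norm_commutatorIntegrand (ℓ : ℝ → ℂ) (d : n → ℝ) (K : Matrix n n ℂ) (p : ℝ × ℝ) :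
    ‖commutatorIntegrand ℓ d K p‖ = ‖ℓ p.1‖ * ‖K‖ := by
  rw [commutatorIntegrand, norm_smul, norm_diagonalExpI_mul_mul_diagonalExpI]

theorem integrable_commutatorIntegrand {ℓ : ℝ → ℂ} (hℓ : Integrable ℓ) (d : n → ℝ)
    (K : Matrix n n ℂ) :
    Integrable (commutatorIntegrand ℓ d K) (volume.prod (volume.restrict (Ioc 0 1))) := by
  have hcont : Continuous fun p : ℝ × ℝ =>
      diagonalExpI d (p.1 * p.2) * K * diagonalExpI d (p.1 * (1 - p.2)) :=
    (((continuous_diagonalExpI d).comp (by fun_prop)).mul continuous_const).mul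
      ((continuous_diagonalExpI d).comp (by fun_prop))
  refine (hℓ.norm.comp_fst _ |>.mul_const ‖K‖).mono'
    ((hℓ.1.comp_fst).smul hcont.aestronglyMeasurable) (ae_of_all _ fun p => ?_)
  rw [norm_commutatorIntegrand]

theorem integral_norm_commutatorIntegrand (ℓ : ℝ → ℂ) (d : n → ℝ) (K : Matrix n n ℂ) :
    ∫ p, ‖commutatorIntegrand ℓ d K p‖ ∂(volume.prod (volume.restrict (Ioc 0 1))) =
      (∫ t, ‖ℓ t‖) * ‖K‖ := by
  simp_rw [norm_commutatorIntegrand]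
  rw [integral_prod_mul (fun t => ‖ℓ t‖) (fun _ => ‖K‖), setIntegral_const]
  simp

theorem diagonal_commutator_eq_integral {k ℓ : ℝ → ℂ} (hℓ : Integrable ℓ)
    (hk : ∀ a b : ℝ, k a - k b = ∫ t : ℝ, ℓ t * ∫ x in b..a, exp (I * t * x))
    (d : n → ℝ) (C : Matrix n n ℂ) :
    diagonal (k ∘ d) * C - C * diagonal (k ∘ d) =
      ∫ p, commutatorIntegrand ℓ d (diagonal (ofReal ∘ d) * C - C * diagonal (ofReal ∘ d)) p
        ∂(volume.prod (volume.restrict (Ioc 0 1))) := by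
  set K := diagonal (ofReal ∘ d) * C - C * diagonal (ofReal ∘ d)
  have hint := integrable_commutatorIntegrand hℓ d K
  ext i j
  have hK : K i j = (d i - d j) * C i j := by
    simp only [K, Matrix.sub_apply, diagonal_mul, mul_diagonal, Function.comp_apply]; ring
  let entry := (entryLinearMap ℂ ℂ i j).toContinuousLinearMap
  calc (diagonal (k ∘ d) * C - C * diagonal (k ∘ d)) i j
      = (k (d i) - k (d j)) * C i j := by
        simp only [Matrix.sub_apply, diagonal_mul, mul_diagonal, Function.comp_apply]; ring
    _ = ∫ t, (ℓ t * ∫ x in d j..d i, exp (I * t * x)) * C i j := by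
        rw [integral_mul_const, hk]
    _ = ∫ t, ∫ s in Ioc 0 1, commutatorIntegrand ℓ d K (t, s) i j := by
        refine integral_congr_ae (ae_of_all _ fun t => ?_)
        simp only [commutatorIntegrand, Matrix.smul_apply, smul_eq_mul,
          diagonalExpI_mul_mul_diagonalExpI_apply, hK, intervalIntegral_exp_I_mul_eq_sub_mul,
          intervalIntegral.integral_of_le zero_le_one, ← integral_const_mul, ← integral_mul_const]
        refine integral_congr_ae (ae_of_all _ fun s => ?_)
        ring
    _ = ∫ p, commutatorIntegrand ℓ d K p i j ∂(volume.prod (volume.restrict (Ioc 0 1))) :=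
        (integral_prod _ (entry.integrable_comp hint)).symm
    _ = (∫ p, commutatorIntegrand ℓ d K p ∂(volume.prod (volume.restrict (Ioc 0 1)))) i j :=
        entry.integral_comp_comm hint

theorem norm_diagonal_commutator_le {k ℓ : ℝ → ℂ} (hℓ : Integrable ℓ)
    (hk : ∀ a b : ℝ, k a - k b = ∫ t : ℝ, ℓ t * ∫ x in b..a, exp (I * t * x))
    (d : n → ℝ) (C : Matrix n n ℂ) :
    ‖diagonal (k ∘ d) * C - C * diagonal (k ∘ d)‖ ≤
      (∫ t, ‖ℓ t‖) * ‖diagonal (ofReal ∘ d) * C - C * diagonal (ofReal ∘ d)‖ := by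
  rw [diagonal_commutator_eq_integral hℓ hk, ← integral_norm_commutatorIntegrand]
  exact norm_integral_le_integral_norm _

end

/-- If `k' (x) = ∫ ℓ(t) e^{itx} dt` with `ℓ ∈ L¹`, then `‖[k(A), B]‖ ≤ ‖ℓ‖₁ ‖[A, B]‖`. -/
theorem commutator_funcCalc_bound {n : Type*} [Fintype n] [DecidableEq n]
    {A : Matrix n n ℂ} (B : Matrix n n ℂ) (hA : A.IsHermitian)
    (k : ℝ → ℝ) (ℓ : ℝ → ℂ) (hk : ContDiff ℝ 1 k) (hℓ : Integrable ℓ)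
    (hrep : ∀ x : ℝ, ((deriv k x : ℝ) : ℂ) = ∫ t : ℝ, ℓ t * Complex.exp (Complex.I * t * x)) :
    ‖hermCFC hA k * B - B * hermCFC hA k‖ ≤ (∫ t : ℝ, ‖ℓ t‖) * ‖A * B - B * A‖ := by
  have hU := hA.eigenvectorUnitary.2
  have hk' (a b : ℝ) :
      (k a : ℂ) - k b = ∫ t : ℝ, ℓ t * ∫ x in b..a, Complex.exp (Complex.I * t * x) :=
    sub_eq_integral_mul_intervalIntegral_exp (Complex.ofRealCLM.contDiff.comp hk) hℓ
      (fun x => (hk.differentiable one_ne_zero x).hasDerivAt.ofReal_comp.deriv.trans (hrep x)) a b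
  rw [hermCFC, norm_commutator_conj_unitary hU]
  conv_rhs =>
    rw [hA.spectral_theorem, Unitary.conjStarAlgAut_apply, norm_commutator_conj_unitary hU]
  exact norm_diagonal_commutator_le hℓ hk' hA.eigenvalues _
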